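/- For every δ > 0 there exists C > 0 such that K₁(x,y) ≤ C for all x, y ∈ ℝ² with |x − y| ≥ δ. -/

import Mathlib

/-!
Since `|R_a x - R_b y| = |x - R_{b-a} y|`, substituting `t = b - a` bounds `K₁(x, y)` by half the
integral of `k(t) = (|x - R_t y|² + t²)^(-1/2)` over `[-2π, 2π]`. In polar form
`|x - R_t y|² = (|x| - |y|)² + 2|x||y|(1 - cos (t - ψ))` with `|ψ| ≤ π`, and its value
`|x - y|² ≥ δ²` at `t = 0` controls it wherever `1 - cos (t - ψ) ≥ (1 - cos ψ)/4`, in particular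
for `|ψ|/2 ≤ |t - ψ| ≤ 3π/2`; there `k ≤ 2/δ`, and for larger `|t - ψ|` we have `|t| > π/2`, so
`k ≤ 1`. On the remaining window `|t - ψ| < |ψ|/2`, of length `|ψ|`, `k ≤ 1/|t| < 2/|ψ|`, so the
window contributes at most `2`.
-/

open MeasureTheory Real intervalIntegral

/-- Euclidean norm on `ℝ²`. -/
noncomputable def vnorm (x : ℝ × ℝ) : ℝ := Real.sqrt (x.1 ^ 2 + x.2 ^ 2)

/-- Rotation `R_a` on `ℝ²`. -/
noncomputable def vrot (a : ℝ) (x : ℝ × ℝ) : ℝ × ℝ :=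
  (x.1 * Real.cos a + x.2 * Real.sin a, -x.1 * Real.sin a + x.2 * Real.cos a)

/-- Japanese bracket `⟨x⟩ = √(1+|x|²)` on `ℝ²`. -/
noncomputable def jap (x : ℝ × ℝ) : ℝ := Real.sqrt (1 + x.1 ^ 2 + x.2 ^ 2)

/-- The kernel `K₁` appearing in the energy of the helical Euler equation. -/
noncomputable def K1 (x y : ℝ × ℝ) : ℝ :=
  (1 / (4 * π)) * ∫ a in (-π)..π, ∫ b in (-π)..π,
    1 / Real.sqrt (vnorm (vrot a x - vrot b y) ^ 2 + (a - b) ^ 2)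

lemma vnorm_nonneg (v : ℝ × ℝ) : 0 ≤ vnorm v := Real.sqrt_nonneg _

lemma vnorm_sq (v : ℝ × ℝ) : vnorm v ^ 2 = v.1 ^ 2 + v.2 ^ 2 :=
  Real.sq_sqrt (by positivity)

lemma continuous_vnorm : Continuous vnorm := by
  unfold vnorm
  fun_prop

lemma continuous_vrot (y : ℝ × ℝ) : Continuous fun t => vrot t y := by
  unfold vrot
  fun_prop

lemma vrot_zero (y : ℝ × ℝ) : vrot 0 y = y := by
  simp [vrot]

lemma vrot_vrot (a c : ℝ) (y : ℝ × ℝ) : vrot a (vrot c y) = vrot (a + c) y := by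
  simp only [vrot, Real.cos_add, Real.sin_add, Prod.mk.injEq]
  constructor <;> ring

lemma vrot_sub (a : ℝ) (u v : ℝ × ℝ) : vrot a (u - v) = vrot a u - vrot a v := by
  simp only [vrot, Prod.fst_sub, Prod.snd_sub, Prod.mk_sub_mk, Prod.mk.injEq]
  constructor <;> ring

lemma vnorm_vrot (a : ℝ) (v : ℝ × ℝ) : vnorm (vrot a v) = vnorm v := by
  unfold vnorm vrot
  congr 1
  linear_combination (v.1 ^ 2 + v.2 ^ 2) * Real.sin_sq_add_cos_sq a

lemma vnorm_vrot_sub_vrot (x y : ℝ × ℝ) (a b : ℝ) :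
    vnorm (vrot a x - vrot b y) = vnorm (x - vrot (b - a) y) := by
  rw [← vnorm_vrot a (x - _), vrot_sub, vrot_vrot, add_sub_cancel]

/-- `ψ` is the argument of `x̄ y` when `x, y` are read as complex numbers. -/
lemma exists_vnorm_sub_vrot_sq (x y : ℝ × ℝ) :
    ∃ ψ : ℝ, |ψ| ≤ π ∧ ∀ t : ℝ, vnorm (x - vrot t y) ^ 2
      = (vnorm x - vnorm y) ^ 2 + 2 * (vnorm x * vnorm y) * (1 - Real.cos (t - ψ)) := by
  set z : ℂ := ⟨x.1 * y.1 + x.2 * y.2, x.1 * y.2 - x.2 * y.1⟩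
  have hz : ‖z‖ = vnorm x * vnorm y := by
    rw [Complex.norm_def, Complex.normSq_apply, vnorm, vnorm, ← Real.sqrt_mul (by positivity)]
    congr 1
    ring
  refine ⟨Complex.arg z, Complex.abs_arg_le_pi z, fun t => ?_⟩
  have hre : ‖z‖ * Real.cos (Complex.arg z) = x.1 * y.1 + x.2 * y.2 := Complex.norm_mul_cos_arg z
  have him : ‖z‖ * Real.sin (Complex.arg z) = x.1 * y.2 - x.2 * y.1 := Complex.norm_mul_sin_arg z
  rw [hz] at hre him
  rw [vnorm_sq, Real.cos_sub]
  simp only [vrot, Prod.fst_sub, Prod.snd_sub]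
  linear_combination (y.1 ^ 2 + y.2 ^ 2) * Real.sin_sq_add_cos_sq t - vnorm_sq x - vnorm_sq y
    + 2 * Real.cos t * hre + 2 * Real.sin t * him

lemma one_sub_cos_le_four_mul_one_sub_cos {ψ s : ℝ} (hs : |ψ| / 2 ≤ |s|)
    (hs' : |s| ≤ 3 * π / 2) : 1 - Real.cos ψ ≤ 4 * (1 - Real.cos s) := by
  rcases le_or_gt |s| π with hsπ | hsπ
  · have hcos : Real.cos s ≤ Real.cos (ψ / 2) := by
      rw [← Real.cos_abs s, ← Real.cos_abs (ψ / 2), abs_div, abs_two]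
      exact Real.cos_le_cos_of_nonneg_of_le_pi (by positivity) hsπ hs
    have hdouble : Real.cos ψ = 2 * Real.cos (ψ / 2) ^ 2 - 1 := by
      rw [← Real.cos_two_mul, mul_div_cancel₀ ψ two_ne_zero]
    -- `1 - cos ψ = 2 (1 - c) (1 + c) ≤ 4 (1 - c)` with `c = cos (ψ / 2)`
    nlinarith [sq_nonneg (1 - Real.cos (ψ / 2))]
  · have hcos : Real.cos s ≤ 0 := by
      rw [← Real.cos_abs s]
      exact Real.cos_nonpos_of_pi_div_two_le_of_le (by linarith) (by linarith)
    linarith [Real.neg_one_le_cos ψ]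

lemma intervalIntegral_le_of_le_add_indicator_ball {f : ℝ → ℝ} {a b M c u r : ℝ} (hab : a ≤ b)
    (hf : IntervalIntegrable f volume a b) (hc : 0 ≤ c) (hr : 0 ≤ r)
    (h : ∀ t, f t ≤ M + (Metric.ball u r).indicator (fun _ => c) t) :
    ∫ t in a..b, f t ≤ M * (b - a) + c * (2 * r) := by
  have hind : Integrable ((Metric.ball u r).indicator fun _ => c) :=
    (integrable_indicator_iff Metric.isOpen_ball.measurableSet).2 integrableOn_const
  calc ∫ t in a..b, f t ≤ ∫ t in a..b, (M + (Metric.ball u r).indicator (fun _ => c) t) :=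
        integral_mono_on hab hf (intervalIntegrable_const.add hind.intervalIntegrable)
          fun t _ => h t
    _ = M * (b - a) + ∫ t in a..b, (Metric.ball u r).indicator (fun _ => c) t := by
        rw [integral_add intervalIntegrable_const hind.intervalIntegrable,
          intervalIntegral.integral_const, smul_eq_mul, mul_comm]
    _ ≤ M * (b - a) + ∫ t, (Metric.ball u r).indicator (fun _ => c) t := by
        rw [integral_of_le hab]
        exact add_le_add_right (setIntegral_le_integral hind
          (Filter.Eventually.of_forall (Set.indicator_nonneg fun _ _ => hc))) _
    _ = M * (b - a) + c * (2 * r) := by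
        rw [integral_indicator_const c Metric.isOpen_ball.measurableSet, Real.volume_real_ball hr,
          smul_eq_mul, mul_comm c]

noncomputable def k1Integrand (x y : ℝ × ℝ) (t : ℝ) : ℝ :=
  1 / Real.sqrt (vnorm (x - vrot t y) ^ 2 + t ^ 2)

section k1Integrand

variable {x y : ℝ × ℝ} {δ : ℝ}

lemma k1Integrand_nonneg (x y : ℝ × ℝ) (t : ℝ) : 0 ≤ k1Integrand x y t := by
  unfold k1Integrand
  positivity

lemma one_div_sqrt_eq_k1Integrand (x y : ℝ × ℝ) (a b : ℝ) :
    1 / Real.sqrt (vnorm (vrot a x - vrot b y) ^ 2 + (a - b) ^ 2) = k1Integrand x y (b - a) := by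
  rw [k1Integrand, vnorm_vrot_sub_vrot, ← neg_sub b a, neg_sq]

lemma k1Integrand_le_of_sq_le {t c : ℝ} (hc : 0 < c)
    (h : c ^ 2 ≤ vnorm (x - vrot t y) ^ 2 + t ^ 2) : k1Integrand x y t ≤ 1 / c :=
  one_div_le_one_div_of_le hc (Real.le_sqrt_of_sq_le h)

lemma continuous_k1Integrand (hxy : 0 < vnorm (x - y)) : Continuous (k1Integrand x y) := by
  have hpos : ∀ t, 0 < vnorm (x - vrot t y) ^ 2 + t ^ 2 := by
    intro t
    rcases eq_or_ne t 0 with rfl | ht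
    · simpa [vrot_zero] using pow_pos hxy 2
    · positivity
  refine continuous_const.div ?_ fun t => (Real.sqrt_pos.2 (hpos t)).ne'
  exact (((continuous_vnorm.comp (continuous_const.sub (continuous_vrot y))).pow 2).add
    (continuous_pow 2)).sqrt

lemma K1_le_half_integral_k1Integrand (hxy : 0 < vnorm (x - y)) :
    K1 x y ≤ (∫ t in (-(2 * π))..(2 * π), k1Integrand x y t) / 2 := by
  set I := ∫ t in (-(2 * π))..(2 * π), k1Integrand x y t
  have hinner : ∀ a ∈ Set.uIoc (-π) π,
      ‖∫ b in (-π)..π, 1 / Real.sqrt (vnorm (vrot a x - vrot b y) ^ 2 + (a - b) ^ 2)‖ ≤ I := by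
    intro a ha
    rw [Set.uIoc_of_le (by linarith [pi_pos])] at ha
    simp_rw [one_div_sqrt_eq_k1Integrand]
    rw [integral_comp_sub_right (k1Integrand x y) a, Real.norm_of_nonneg
      (integral_nonneg (by linarith [pi_pos]) fun t _ => k1Integrand_nonneg x y t)]
    exact integral_mono_interval (by linarith [ha.2]) (by linarith [pi_pos]) (by linarith [ha.1])
      (Filter.Eventually.of_forall (k1Integrand_nonneg x y))
      ((continuous_k1Integrand hxy).intervalIntegrable _ _)
  calc K1 x y ≤ 1 / (4 * π) * (I * |π - -π|) :=
        mul_le_mul_of_nonneg_left ((Real.le_norm_self _).trans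
          (norm_integral_le_of_norm_le_const hinner)) (by positivity)
    _ = I / 2 := by
        rw [abs_of_pos (by linarith [pi_pos])]
        field_simp
        ring

lemma exists_k1Integrand_le_add_indicator (hδ : 0 < δ) (hxy : δ ≤ vnorm (x - y)) :
    ∃ ψ : ℝ, ∀ t, k1Integrand x y t
      ≤ 2 / δ + 1 + (Metric.ball ψ (|ψ| / 2)).indicator (fun _ => 2 / |ψ|) t := by
  obtain ⟨ψ, hψ, hpolar⟩ := exists_vnorm_sub_vrot_sq x y
  refine ⟨ψ, fun t => ?_⟩
  have hR : 0 ≤ vnorm x * vnorm y := mul_nonneg (vnorm_nonneg x) (vnorm_nonneg y)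
  have hsq_le : t ^ 2 ≤ vnorm (x - vrot t y) ^ 2 + t ^ 2 := by
    linarith [sq_nonneg (vnorm (x - vrot t y))]
  have hδ_sq : δ ^ 2 ≤ (vnorm x - vnorm y) ^ 2 + 2 * (vnorm x * vnorm y) * (1 - Real.cos ψ) := by
    have h0 := hpolar 0
    rw [vrot_zero, zero_sub, Real.cos_neg] at h0
    rw [← h0]
    exact pow_le_pow_left₀ hδ.le hxy 2
  have hδ_inv : 0 ≤ 2 / δ := by positivity
  by_cases ht : t ∈ Metric.ball ψ (|ψ| / 2)
  · rw [Set.indicator_of_mem ht]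
    rw [Metric.mem_ball, Real.dist_eq] at ht
    have ht_abs : |ψ| / 2 < |t| := by
      linarith [abs_sub_abs_le_abs_sub ψ t, abs_sub_comm t ψ]
    have hbound : k1Integrand x y t ≤ 1 / (|ψ| / 2) :=
      k1Integrand_le_of_sq_le (by linarith [abs_nonneg (t - ψ)])
        (by nlinarith [sq_abs t, abs_nonneg ψ])
    rw [one_div_div] at hbound
    linarith
  · rw [Set.indicator_of_notMem ht, add_zero]
    rw [Metric.mem_ball, Real.dist_eq, not_lt] at ht
    rcases le_or_gt |t - ψ| (3 * π / 2) with hnear | hfar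
    · have hcos := mul_le_mul_of_nonneg_left
        (one_sub_cos_le_four_mul_one_sub_cos ht hnear) hR
      have hbound : k1Integrand x y t ≤ 1 / (δ / 2) :=
        k1Integrand_le_of_sq_le (by positivity) (by rw [hpolar t]; nlinarith [sq_nonneg t])
      rw [one_div_div] at hbound
      linarith
    · have ht_abs : π / 2 < |t| := by linarith [abs_sub t ψ]
      have hbound : k1Integrand x y t ≤ 1 / 1 :=
        k1Integrand_le_of_sq_le one_pos (by nlinarith [sq_abs t, Real.pi_gt_three])
      linarith

lemma integral_k1Integrand_le (hδ : 0 < δ) (hxy : δ ≤ vnorm (x - y)) :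
    ∫ t in (-(2 * π))..(2 * π), k1Integrand x y t ≤ (2 / δ + 1) * (4 * π) + 2 := by
  obtain ⟨ψ, hψ⟩ := exists_k1Integrand_le_add_indicator hδ hxy
  have hwindow : 2 / |ψ| * (2 * (|ψ| / 2)) ≤ 2 := by
    rcases eq_or_ne ψ 0 with rfl | hψ0
    · simp
    · field_simp [abs_pos.2 hψ0]
      exact le_rfl
  calc ∫ t in (-(2 * π))..(2 * π), k1Integrand x y t
      ≤ (2 / δ + 1) * (2 * π - -(2 * π)) + 2 / |ψ| * (2 * (|ψ| / 2)) :=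
        intervalIntegral_le_of_le_add_indicator_ball (by linarith [pi_pos])
          ((continuous_k1Integrand (hδ.trans_le hxy)).intervalIntegrable _ _) (by positivity)
          (by positivity) hψ
    _ ≤ (2 / δ + 1) * (4 * π) + 2 := by linarith

end k1Integrand

/-- away from the diagonal, `K₁` is bounded. -/
theorem stmt_5 : ∀ δ > (0:ℝ), ∃ C > (0:ℝ), ∀ x y : ℝ × ℝ,
    δ ≤ vnorm (x - y) → K1 x y ≤ C := by
  intro δ hδ
  refine ⟨(2 / δ + 1) * (2 * π) + 1, by positivity, fun x y hxy => ?_⟩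
  calc K1 x y ≤ (∫ t in (-(2 * π))..(2 * π), k1Integrand x y t) / 2 :=
        K1_le_half_integral_k1Integrand (hδ.trans_le hxy)
    _ ≤ (2 / δ + 1) * (2 * π) + 1 := by linarith [integral_k1Integrand_le hδ hxy]
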